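/- Let H = \mathbb{Q}[u_1,u_2,\theta]/(\theta^3 - u_1 u_2), and let I be the formal series in H((z^{-1}))[[x_0, x_1, t_1, t_2]] given by I = z \exp((u_1 t_1 + u_2 t_2)/z) \sum_{(k_0,k_1) \in \mathbb{N}^2} \frac{x_0^{k_0} x_1^{k_1}}{z^{k_0+k_1} k_0! k_1!} \theta^{k_1 \bmod 3} \prod_{b} (u_1+bz)(u_2+bz), where the product runs over the rationals b with -k_1/3 < b \le 0 and b + k_1/3 \in \mathbb{Z}. Then the coefficient of z^k in I vanishes for every k \ge 2, the coefficient of z^1 equals 1, and the coefficient of z^0 equals t_1 u_1 + t_2 u_2 + x_0 + x_1 \theta. -/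

import Mathlib

open Finset

noncomputable section

/-- `H = ℚ[u₁,u₂,θ]/(θ³ - u₁u₂)`, the `𝕋`-equivariant Chen–Ruan cohomology of `⅓(1,1)`. -/
abbrev H8 : Type :=
  MvPolynomial (Fin 3) ℚ ⧸
    Ideal.span {(MvPolynomial.X 2 : MvPolynomial (Fin 3) ℚ) ^ 3 -
      MvPolynomial.X 0 * MvPolynomial.X 1}

def u₁ : H8 := Ideal.Quotient.mk _ (MvPolynomial.X 0)
def u₂ : H8 := Ideal.Quotient.mk _ (MvPolynomial.X 1)
def θ : H8 := Ideal.Quotient.mk _ (MvPolynomial.X 2)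

/-- The element `z` of `H((z⁻¹)) = LaurentSeries H` (Laurent series in `w = z⁻¹`,
so `z = w⁻¹` is the single series with exponent `-1`). -/
def zz : LaurentSeries H8 := HahnSeries.single (-1 : ℤ) 1

/-- The element `z⁻¹` of `H((z⁻¹))`. -/
def zinv : LaurentSeries H8 := HahnSeries.single (1 : ℤ) 1

/-- The inclusion `H → H((z⁻¹))`. -/
abbrev CLS : H8 →+* LaurentSeries H8 := HahnSeries.C

/-- The `S`-extended `I`-function of `⅓(1,1)` as an element of
`H((z⁻¹))[[x₀, x₁, t₁, t₂]]` (variables `0 ↦ x₀`, `1 ↦ x₁`, `2 ↦ t₁`, `3 ↦ t₂`),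
given by its coefficients: the coefficient of `x₀^{k₀} x₁^{k₁} t₁^{a₁} t₂^{a₂}` in
`z exp((u₁t₁+u₂t₂)/z) ∑_{(k₀,k₁)} x₀^{k₀}x₁^{k₁}/(z^{k₀+k₁}k₀!k₁!) θ^{k₁ mod 3}
  ∏_{b} (u₁+bz)(u₂+bz)`
(the product over rationals `b` with `-k₁/3 < b ≤ 0` and `b + k₁/3 ∈ ℤ`, i.e. over
`b = j - k₁/3`, `j = 1, …, ⌊k₁/3⌋`), namely
`z (u₁/z)^{a₁} (u₂/z)^{a₂} / (a₁! a₂! z^{k₀+k₁} k₀! k₁!) θ^{k₁ mod 3} ∏_b ⋯`. -/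
def I8 : MvPowerSeries (Fin 4) (LaurentSeries H8) := fun m =>
  let k₀ := m 0; let k₁ := m 1; let a₁ := m 2; let a₂ := m 3
  (@algebraMap ℚ (LaurentSeries H8) _ HahnSeries.instSemiring _
      (((k₀.factorial * k₁.factorial * a₁.factorial * a₂.factorial : ℕ) : ℚ)⁻¹)) *
    zz * zinv ^ (k₀ + k₁) * (CLS u₁ * zinv) ^ a₁ * (CLS u₂ * zinv) ^ a₂ *
    CLS (θ ^ (k₁ % 3)) *
    ∏ j ∈ Finset.Icc 1 (k₁ / 3),
      ((CLS u₁ + ((j : ℚ) - (k₁ : ℚ) / 3) • zz) * (CLS u₂ + ((j : ℚ) - (k₁ : ℚ) / 3) • zz))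

/-- The coefficient of `z^k` in a series in `H((z⁻¹))[[x₀,x₁,t₁,t₂]]`, as an element of
`H[[x₀,x₁,t₁,t₂]]`. -/
def zCoeff (I : MvPowerSeries (Fin 4) (LaurentSeries H8)) (k : ℤ) :
    MvPowerSeries (Fin 4) H8 := fun m =>
  (MvPowerSeries.coeff m I).coeff (-k)


/-! Pulling a factor `z` out of each factor `u + bz` of the product writes the coefficient of
`x₀^{k₀} x₁^{k₁} t₁^{a₁} t₂^{a₂}` in `I` as `z^{-d}` times a power series in `z⁻¹`, where
`d = k₀ + k₁ + a₁ + a₂ - 2⌊k₁/3⌋ - 1 ≥ -1` (`ordI8`). Hence no power `z^k` with `k ≥ 2`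
occurs, `z¹` only for the constant term, and `z⁰` only for the monomials with `d ≤ 0`:
`1, x₀, x₁, x₁³, t₁, t₂`.
For `x₁³` the leading term vanishes, because the only factor of the product has `b = 0`. -/

theorem LaurentSeries.coeff_single_one_mul_coe {R : Type*} [Semiring R] (a e : ℤ)
    (f : PowerSeries R) :
    (HahnSeries.single a (1 : R) * (f : LaurentSeries R)).coeff e =
      if e < a then 0 else PowerSeries.coeff (e - a).natAbs f := by
  rw [HahnSeries.coeff_single_mul, one_mul, PowerSeries.coeff_coe]
  simp only [sub_neg]

def ordI8 (m : Fin 4 →₀ ℕ) : ℤ := m 0 + m 1 + m 2 + m 3 - 2 * (m 1 / 3 : ℕ) - 1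

open PowerSeries in
def seriesI8 (m : Fin 4 →₀ ℕ) : H8⟦X⟧ :=
  C (algebraMap ℚ H8 (((m 0).factorial * (m 1).factorial * (m 2).factorial *
      (m 3).factorial : ℕ) : ℚ)⁻¹ * u₁ ^ m 2 * u₂ ^ m 3 * θ ^ (m 1 % 3)) *
    ∏ j ∈ Icc 1 (m 1 / 3),
      (C (algebraMap ℚ H8 ((j : ℚ) - (m 1 : ℚ) / 3)) + C u₁ * X) *
        (C (algebraMap ℚ H8 ((j : ℚ) - (m 1 : ℚ) / 3)) + C u₂ * X)

lemma zz_mul_zinv : zz * zinv = 1 := by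
  rw [zz, zinv, HahnSeries.single_mul_single, neg_add_cancel, one_mul,
    HahnSeries.single_zero_one]

lemma smul_zz (q : ℚ) : q • zz = CLS (algebraMap ℚ H8 q) * zz := by
  rw [HahnSeries.C_mul_eq_smul, algebraMap_smul]

lemma C_add_smul_zz (q : ℚ) (u : H8) :
    CLS u + q • zz = zz * (CLS (algebraMap ℚ H8 q) + CLS u * zinv) := by
  linear_combination (-CLS u) * zz_mul_zinv + smul_zz q

-- Stated with the instance path occurring in `I8`, which `HahnSeries.algebraMap_apply`
-- does not match.
lemma algebraMap_rat_laurentSeries (q : ℚ) :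
    @algebraMap ℚ (LaurentSeries H8) _ HahnSeries.instSemiring _ q =
      CLS (algebraMap ℚ H8 q) := by
  rw [HahnSeries.algebraMap_apply', PowerSeries.algebraMap_apply, HahnSeries.ofPowerSeries_C]

lemma zz_mul_zinv_pow_mul_zz_pow (a b : ℕ) :
    zz * zinv ^ a * zz ^ b = HahnSeries.single ((a : ℤ) - b - 1) 1 := by
  simp only [zz, zinv, HahnSeries.single_pow, HahnSeries.single_mul_single, one_pow, mul_one]
  congr 2
  simp only [nsmul_eq_mul]
  ring

lemma I8_apply (m : Fin 4 →₀ ℕ) :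
    I8 m = HahnSeries.single (ordI8 m) 1 * (seriesI8 m : LaurentSeries H8) := by
  have hpair (q : ℚ) : (CLS u₁ + q • zz) * (CLS u₂ + q • zz) =
      zz ^ 2 * ((CLS (algebraMap ℚ H8 q) + CLS u₁ * zinv) *
        (CLS (algebraMap ℚ H8 q) + CLS u₂ * zinv)) := by
    rw [C_add_smul_zz, C_add_smul_zz]
    ring
  have hmonomial : zz * zinv ^ (m 0 + m 1 + m 2 + m 3) * (zz ^ 2) ^ (m 1 / 3) =
      HahnSeries.single (ordI8 m) 1 := by
    rw [← pow_mul, zz_mul_zinv_pow_mul_zz_pow, ordI8]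
    push_cast
    ring
  have hC (r : H8) : ((PowerSeries.C r : PowerSeries H8) : LaurentSeries H8) = CLS r :=
    HahnSeries.ofPowerSeries_C r
  have hX : ((PowerSeries.X : PowerSeries H8) : LaurentSeries H8) = zinv :=
    HahnSeries.ofPowerSeries_X
  simp only [I8, hpair, algebraMap_rat_laurentSeries]
  rw [prod_mul_distrib, prod_const, Nat.card_Icc, Nat.add_sub_cancel, ← hmonomial]
  simp only [seriesI8, map_mul, map_prod, map_add, map_pow, hC, hX]
  ring

lemma coeff_I8 (m : Fin 4 →₀ ℕ) (e : ℤ) :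
    (I8 m).coeff e =
      if e < ordI8 m then 0 else PowerSeries.coeff (e - ordI8 m).natAbs (seriesI8 m) := by
  rw [I8_apply, LaurentSeries.coeff_single_one_mul_coe]

lemma neg_one_le_ordI8 (m : Fin 4 →₀ ℕ) : -1 ≤ ordI8 m := by
  unfold ordI8
  omega

lemma ordI8_nonneg_of_ne_zero {m : Fin 4 →₀ ℕ} (hm : m ≠ 0) : 0 ≤ ordI8 m := by
  obtain ⟨i, hi⟩ := Finsupp.ne_iff.mp hm
  unfold ordI8
  fin_cases i <;> simp at hi <;> omega

lemma eq_of_ordI8_nonpos {m : Fin 4 →₀ ℕ} (hm : ordI8 m ≤ 0) :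
    m = 0 ∨ m = Finsupp.single 0 1 ∨ m = Finsupp.single 1 1 ∨ m = Finsupp.single 1 3 ∨
      m = Finsupp.single 2 1 ∨ m = Finsupp.single 3 1 := by
  unfold ordI8 at hm
  simp [Finsupp.ext_iff, Fin.forall_fin_succ]
  omega

lemma coeff_zCoeff (I : MvPowerSeries (Fin 4) (LaurentSeries H8)) (k : ℤ) (m : Fin 4 →₀ ℕ) :
    MvPowerSeries.coeff m (zCoeff I k) = (MvPowerSeries.coeff m I).coeff (-k) := rfl

/-- The coefficient of `z^k` in `I` vanishes for `k ≥ 2`, the coefficient of `z¹`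
equals `1`, and the coefficient of `z⁰` equals `t₁u₁ + t₂u₂ + x₀ + x₁θ`. -/
theorem statement8 :
    (∀ k : ℤ, 2 ≤ k → zCoeff I8 k = 0) ∧
    zCoeff I8 1 = 1 ∧
    zCoeff I8 0 =
      MvPowerSeries.X 2 * MvPowerSeries.C (σ := Fin 4) (R := H8) u₁ +
        MvPowerSeries.X 3 * MvPowerSeries.C (σ := Fin 4) (R := H8) u₂ +
        MvPowerSeries.X 0 + MvPowerSeries.X 1 * MvPowerSeries.C (σ := Fin 4) (R := H8) θ := by
  refine ⟨fun k hk => ?_, ?_, ?_⟩ <;> ext m <;>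
    rw [coeff_zCoeff, MvPowerSeries.coeff_apply, coeff_I8]
  · rw [if_pos (by linarith [neg_one_le_ordI8 m]), map_zero]
  · rw [MvPowerSeries.coeff_one]
    by_cases hm : m = 0
    · subst hm
      simp [ordI8, seriesI8]
    · rw [if_pos (by linarith [ordI8_nonneg_of_ne_zero hm]), if_neg hm]
  · by_cases hm : ordI8 m ≤ 0
    · rcases eq_of_ordI8_nonpos hm with rfl | rfl | rfl | rfl | rfl | rfl <;>
        simp [ordI8, seriesI8, MvPowerSeries.coeff_X, MvPowerSeries.coeff_mul_C,
          Finsupp.single_eq_single_iff]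
    · have hsingle : ∀ i, m ≠ Finsupp.single i 1 := by
        rintro i rfl
        fin_cases i <;> simp [ordI8] at hm
      simp [if_pos (not_le.mp hm), MvPowerSeries.coeff_X, MvPowerSeries.coeff_mul_C, hsingle]

end
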